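/- arXiv:1110.4703 — 4 statements merged into one kernel-verified Lean document; each statement's English description precedes it below -/
import Mathlib

section
/- For a Poisson random variable Q with mean C^γ (0<γ<1), the limit as C→∞ of -(log P(Q > C))/(C log C) equals 1 - γ. -/
open Filter Real

noncomputable def poisP (l : ℝ) (k : ℕ) : ℝ := Real.exp (-l) * l ^ k / (Nat.factorial k)

noncomputable def poissonTail (l : ℝ) (a : ℝ) : ℝ :=
  ∑' k : ℕ, if a < (k : ℝ) then poisP l k else 0

/-! `P(Q > n)` is squeezed between `P(Q = n + 1)` and twice that as soon as the mean is at most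
`(n + 1) / 2`, because the Poisson weights beyond `n + 1` then decay at least geometrically with
ratio `1 / 2`. Hence `-log P(Q > C) = C^γ - (C + 1) γ log C + log (C + 1)! + O(1)`, and the
elementary bounds `n log n - n ≤ log n! ≤ n log n` show that this is `(1 - γ) C log C + O(C)`. -/

section Poisson

variable {l : ℝ}

lemma poisP_nonneg (hl : 0 ≤ l) (k : ℕ) : 0 ≤ poisP l k := by
  unfold poisP; positivity

lemma poisP_pos (hl : 0 < l) (k : ℕ) : 0 < poisP l k := by
  unfold poisP; positivity

lemma summable_poisP (l : ℝ) : Summable (poisP l) :=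
  ((summable_pow_div_factorial l).mul_left (exp (-l))).congr fun k => by
    simp only [poisP, mul_div_assoc]

lemma poisP_succ (l : ℝ) (k : ℕ) : poisP l (k + 1) = poisP l k * (l / (k + 1)) := by
  simp only [poisP, Nat.factorial_succ, Nat.cast_mul, Nat.cast_succ, pow_succ]
  field_simp

lemma log_poisP (hl : 0 < l) (k : ℕ) :
    log (poisP l k) = -l + k * log l - log (Nat.factorial k) := by
  rw [poisP, log_div (by positivity) (by positivity), log_mul (exp_ne_zero _) (by positivity),
    log_exp, log_pow]

lemma poisP_add_le_mul_half_pow (hl : 0 ≤ l) {m : ℕ} (hm : 2 * l ≤ m) (j : ℕ) :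
    poisP l (j + m) ≤ poisP l m * (1 / 2) ^ j := by
  induction j with
  | zero => simp
  | succ j ih =>
    have hratio : l / ((j + m : ℕ) + 1) ≤ 1 / 2 := by
      rw [div_le_iff₀ (by positivity)]
      push_cast
      linarith [(j.cast_nonneg : (0 : ℝ) ≤ j)]
    calc poisP l (j + 1 + m) = poisP l (j + m) * (l / ((j + m : ℕ) + 1)) := by
          rw [Nat.add_right_comm, poisP_succ]
      _ ≤ poisP l m * (1 / 2) ^ j * (1 / 2) :=
          mul_le_mul ih hratio (by positivity) (mul_nonneg (poisP_nonneg hl m) (by positivity))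
      _ = poisP l m * (1 / 2) ^ (j + 1) := by ring

lemma poissonTail_eq_tsum_poisP_add (l : ℝ) (n : ℕ) :
    poissonTail l n = ∑' j : ℕ, poisP l (j + (n + 1)) := by
  have hsummable : Summable fun k : ℕ => if (n : ℝ) < k then poisP l k else 0 :=
    (summable_poisP l).indicator {k : ℕ | (n : ℝ) < k} |>.congr fun k => by
      simp [Set.indicator_apply]
  rw [poissonTail, ← hsummable.sum_add_tsum_nat_add (n + 1), Finset.sum_eq_zero, zero_add]
  · refine tsum_congr fun j => if_pos ?_
    push_cast
    linarith [(j.cast_nonneg : (0 : ℝ) ≤ j)]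
  · intro k hk
    exact if_neg (not_lt.2 (by exact_mod_cast Nat.lt_succ_iff.1 (Finset.mem_range.1 hk)))

lemma poisP_succ_le_poissonTail (hl : 0 ≤ l) (n : ℕ) : poisP l (n + 1) ≤ poissonTail l n := by
  rw [poissonTail_eq_tsum_poisP_add]
  simpa using ((summable_nat_add_iff (n + 1)).2 (summable_poisP l)).le_tsum 0
    fun j _ => poisP_nonneg hl _

lemma poissonTail_le_two_mul_poisP (hl : 0 ≤ l) {n : ℕ} (hn : 2 * l ≤ n + 1) :
    poissonTail l n ≤ 2 * poisP l (n + 1) := by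
  rw [poissonTail_eq_tsum_poisP_add]
  calc ∑' j : ℕ, poisP l (j + (n + 1)) ≤ ∑' j : ℕ, poisP l (n + 1) * (1 / 2) ^ j :=
        Summable.tsum_le_tsum (poisP_add_le_mul_half_pow hl (by exact_mod_cast hn))
          ((summable_nat_add_iff (n + 1)).2 (summable_poisP l))
          (summable_geometric_two.mul_left _)
    _ = 2 * poisP l (n + 1) := by rw [tsum_mul_left, tsum_geometric_two, mul_comm]

lemma abs_log_poissonTail_sub_log_poisP_le (hl : 0 < l) {n : ℕ} (hn : 2 * l ≤ n + 1) :
    |log (poissonTail l n) - log (poisP l (n + 1))| ≤ log 2 := by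
  have hp := poisP_pos hl (n + 1)
  have hlower := poisP_succ_le_poissonTail hl.le n
  have hupper := log_le_log (hp.trans_le hlower) (poissonTail_le_two_mul_poisP hl.le hn)
  rw [log_mul two_ne_zero hp.ne'] at hupper
  rw [abs_sub_le_iff]
  constructor
  · linarith
  · linarith [log_le_log hp hlower, log_nonneg one_le_two]

end Poisson

lemma log_factorial_le (n : ℕ) : log (Nat.factorial n) ≤ n * log n := by
  rw [← log_pow]
  exact log_le_log (by positivity) (by exact_mod_cast Nat.factorial_le_pow n)

lemma sub_le_log_factorial (n : ℕ) : n * log n - n ≤ log (Nat.factorial n) := by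
  rcases n.eq_zero_or_pos with rfl | hn
  · simp
  have h := log_le_log (pow_pos (Nat.cast_pos.2 hn) n) ((div_le_iff₀ (by positivity)).1
    (pow_div_factorial_le_exp (n : ℝ) n.cast_nonneg n))
  rw [log_pow, log_mul (exp_ne_zero _) (by positivity), log_exp] at h
  linarith

lemma abs_log_factorial_succ_sub_le (n : ℕ) :
    |log (Nat.factorial (n + 1)) - n * log n| ≤ n := by
  have hsucc : log (Nat.factorial (n + 1)) = log (n + 1) + log (Nat.factorial n) := by
    rw [Nat.factorial_succ, Nat.cast_mul, log_mul (by positivity) (by positivity)]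
    push_cast
    ring
  have hlog_succ_le : log (n + 1) ≤ n := by
    linarith [log_le_sub_one_of_pos (by positivity : (0 : ℝ) < n + 1)]
  have hlog_succ_nonneg : 0 ≤ log (n + 1) := log_nonneg (by linarith [n.cast_nonneg (α := ℝ)])
  rw [hsucc, abs_sub_le_iff]
  constructor <;> linarith [log_factorial_le n, sub_le_log_factorial n]

lemma eventually_two_mul_rpow_le {γ : ℝ} (hγ : γ < 1) : ∀ᶠ x : ℝ in atTop, 2 * x ^ γ ≤ x := by
  have hsmall : ∀ᶠ x : ℝ in atTop, x ^ (γ - 1) ≤ 1 / 2 := by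
    have h := tendsto_rpow_neg_atTop (by linarith : 0 < 1 - γ)
    rw [neg_sub] at h
    exact h.eventually (eventually_le_nhds (by norm_num))
  filter_upwards [hsmall, eventually_gt_atTop 0] with x hx hpos
  rw [rpow_sub hpos, rpow_one, div_le_iff₀ hpos] at hx
  linarith

/-- With `λ = C ^ γ`, the three terms of `-log P(Q = C + 1) = λ - (C + 1) γ log C + log (C + 1)!`
differ from `0`, `-γ C log C` and `C log C` by at most `C`, `|γ| C` and `C`; a last `C` absorbs
the `log 2` lost to the tail. -/
lemma abs_neg_log_poissonTail_rpow_sub_le {γ : ℝ} (hγ : γ ≤ 1) {C : ℕ} (hC : 1 ≤ C)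
    (h2 : 2 * (C : ℝ) ^ γ ≤ C) :
    |-log (poissonTail ((C : ℝ) ^ γ) C) - (1 - γ) * C * log C| ≤ (3 + |γ|) * C := by
  have hC1 : (1 : ℝ) ≤ C := by exact_mod_cast hC
  have hpos : (0 : ℝ) < C ^ γ := rpow_pos_of_pos (by linarith) γ
  have htail := abs_log_poissonTail_sub_log_poisP_le hpos (by linarith : 2 * (C : ℝ) ^ γ ≤ C + 1)
  rw [log_poisP hpos, log_rpow (by linarith)] at htail
  have hrpow : |(C : ℝ) ^ γ| ≤ C := by
    rw [abs_of_pos hpos]; exact rpow_le_self_of_one_le hC1 hγ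
  have hlog : |γ * log C| ≤ |γ| * C := by
    rw [abs_mul, abs_of_nonneg (log_nonneg hC1)]
    exact mul_le_mul_of_nonneg_left (log_le_self (by linarith)) (abs_nonneg γ)
  have hfac := abs_log_factorial_succ_sub_le C
  have hlog2 : log 2 ≤ C := by linarith [log_two_lt_d9]
  rw [abs_le] at htail hrpow hlog hfac ⊢
  push_cast at htail
  constructor <;> linarith [htail.1, htail.2, hrpow.1, hrpow.2, hlog.1, hlog.2, hfac.1, hfac.2]

lemma tendsto_div_mul_log_of_abs_sub_le {f : ℕ → ℝ} {a K : ℝ}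
    (h : ∀ᶠ n : ℕ in atTop, |f n - a * n * log n| ≤ K * n) :
    Tendsto (fun n : ℕ => f n / (n * log n)) atTop (nhds a) := by
  have hlog : Tendsto (fun n : ℕ => log n) atTop atTop :=
    tendsto_log_atTop.comp tendsto_natCast_atTop_atTop
  rw [tendsto_iff_norm_sub_tendsto_zero]
  refine squeeze_zero' (Eventually.of_forall fun _ => norm_nonneg _) ?_
    (by simpa using hlog.inv_tendsto_atTop.const_mul K)
  filter_upwards [h, hlog.eventually_gt_atTop 0, eventually_gt_atTop 0] with n hn hlogpos hnpos
  have hD : (0 : ℝ) < n * log n := mul_pos (by exact_mod_cast hnpos) hlogpos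
  have hdiff : f n / (n * log n) - a = (f n - a * n * log n) / (n * log n) := by
    field_simp
  rw [Real.norm_eq_abs, hdiff, abs_div, abs_of_pos hD, div_le_iff₀ hD]
  calc |f n - a * n * log n| ≤ K * n := hn
    _ = K * (log n)⁻¹ * (n * log n) := by field_simp

theorem poisson_polynomial_diversity_general (γ : ℝ) (hγ1 : γ < 1) :
    Tendsto (fun C : ℕ =>
        -(Real.log (poissonTail ((C : ℝ) ^ γ) C)) / ((C : ℝ) * Real.log C))
      atTop (nhds (1 - γ)) := by
  refine tendsto_div_mul_log_of_abs_sub_le (K := 3 + |γ|) ?_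
  filter_upwards [eventually_ge_atTop 1,
    tendsto_natCast_atTop_atTop.eventually (eventually_two_mul_rpow_le hγ1)] with C hC h2
  exact abs_neg_log_poissonTail_rpow_sub_le hγ1.le hC h2

/-- For a Poisson random variable `Q` with mean `C^γ` (`0 < γ < 1`), the limit as
`C → ∞` of `-(log P(Q > C))/(C log C)` equals `1 - γ`. -/
theorem poisson_polynomial_diversity (γ : ℝ) (hγ0 : 0 < γ) (hγ1 : γ < 1) :
    Tendsto (fun C : ℕ =>
        -(Real.log (poissonTail ((C : ℝ) ^ γ) C)) / ((C : ℝ) * Real.log C))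
      atTop (nhds (1 - γ)) :=
  poisson_polynomial_diversity_general γ hγ1
end

section
/- Consider the Markov chain N(n+1) = Q(n) if N(n) ≥ C; N(n+1) = Q(n)/2 + N(n) - C if N(n) < C and N(n) + Q(n)/2 ≥ C; N(n+1) = Q(n)/2 if N(n) + Q(n)/2 < C, where Q(n) are i.i.d. with mean γC, γ ∈ (0,1). Then the drift E[N(n+1) - N(n) | N(n) = i] is at most -(1-γ)C when i ≥ C and at most (γ/2)C when i < C; consequently (by Foster's criterion) the chain is positive recurrent. -/
/-!
When `N(n) ≥ C` the whole capacity serves the backlog and the next state is the fresh arrival,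
so the drift is `γC - i ≤ -(1 - γ)C`. When `N(n) = i < C` the next state is `Q/2 + i - C` or
`Q/2`, both at most `i + Q/2` since `0 ≤ i < C`, giving drift at most `γC/2`.
Since `nextState` grows at most linearly in the arrival, all expectations are finite.
-/

open MeasureTheory Real

/-- One-step transition map of the dynamic-capacity Markov chain with `f = 1/2`,
`T = 1`: from state `i` with arrival `q`, the next state is `q` if `i ≥ C`;
`q/2 + i - C` if `i < C ≤ i + q/2`; and `q/2` if `i + q/2 < C`. -/
noncomputable def nextState (C i q : ℝ) : ℝ :=
  if C ≤ i then q else if C ≤ i + q / 2 then q / 2 + i - C else q / 2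

section NextState

variable {C i q : ℝ}

theorem nextState_of_le (h : C ≤ i) : nextState C i q = q := if_pos h

theorem measurable_nextState (C i : ℝ) : Measurable (nextState C i) := by
  unfold nextState
  split_ifs
  · exact measurable_id
  · exact Measurable.ite (measurableSet_le measurable_const (by fun_prop)) (by fun_prop)
      (by fun_prop)

theorem abs_nextState_le : |nextState C i q| ≤ |q| + |i| + |C| := by
  have := le_abs_self q; have := neg_abs_le q
  have := le_abs_self i; have := neg_abs_le i
  have := le_abs_self C; have := neg_abs_le C
  rw [abs_le]
  unfold nextState
  split_ifs <;> constructor <;> linarith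

theorem nextState_sub_le_half (hi : 0 ≤ i) (hiC : i < C) : nextState C i q - i ≤ q / 2 := by
  unfold nextState
  split_ifs <;> linarith

end NextState

section Drift

variable {Ω : Type*} [MeasurableSpace Ω] {μ : Measure Ω} {Q : Ω → ℝ}

theorem MeasureTheory.Integrable.nextState [IsFiniteMeasure μ] (hQ : Integrable Q μ) (C i : ℝ) :
    Integrable (fun ω => nextState C i (Q ω)) μ := by
  refine (hQ.abs.add (integrable_const (|i| + |C|))).mono
    ((measurable_nextState C i).comp_aemeasurable hQ.aemeasurable).aestronglyMeasurable
    (.of_forall fun ω => ?_)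
  have hbound : 0 ≤ |Q ω| + |i| + |C| := by positivity
  simp only [Pi.add_apply, norm_eq_abs, ← add_assoc, abs_of_nonneg hbound]
  exact abs_nextState_le

theorem integral_nextState_sub_of_le [IsProbabilityMeasure μ] (hQ : Integrable Q μ) {C i : ℝ}
    (h : C ≤ i) : ∫ ω, (nextState C i (Q ω) - i) ∂μ = (∫ ω, Q ω ∂μ) - i := by
  simp only [nextState_of_le h]
  rw [integral_sub hQ (integrable_const i), integral_const, probReal_univ, one_smul]

theorem integral_nextState_sub_le_of_lt [IsFiniteMeasure μ] (hQ : Integrable Q μ) {C i : ℝ}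
    (hi : 0 ≤ i) (hiC : i < C) : ∫ ω, (nextState C i (Q ω) - i) ∂μ ≤ (∫ ω, Q ω ∂μ) / 2 := by
  rw [← integral_div]
  exact integral_mono ((hQ.nextState C i).sub (integrable_const i)) (hQ.div_const 2)
    fun ω => nextState_sub_le_half hi hiC

end Drift

theorem dynamic_capacity_drift_general
    {Ω : Type*} [MeasureSpace Ω] (μ : Measure Ω) [IsProbabilityMeasure μ]
    (Q : Ω → ℝ) (hQint : Integrable Q μ)
    (γ C : ℝ)
    (hmean : ∫ ω, Q ω ∂μ = γ * C) :
    ∀ i : ℝ, 0 ≤ i →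
      (C ≤ i → (∫ ω, (nextState C i (Q ω) - i) ∂μ) ≤ -((1 - γ) * C)) ∧
      (i < C → (∫ ω, (nextState C i (Q ω) - i) ∂μ) ≤ (γ / 2) * C) := by
  intro i hi
  refine ⟨fun hCi => ?_, fun hiC => ?_⟩
  · rw [integral_nextState_sub_of_le hQint hCi, hmean]
    linarith
  · have hdrift := integral_nextState_sub_le_of_lt hQint hi hiC
    rw [hmean] at hdrift
    linarith

/-- Drift bounds for the dynamic-capacity chain (Foster's criterion): with arrivals
`Q` i.i.d. of mean `γC` (`0 < γ < 1`), the drift `E[N(n+1) - N(n) | N(n) = i]` is at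
most `-(1-γ)C` when `i ≥ C`, and at most `(γ/2)C` when `i < C`. -/
theorem dynamic_capacity_drift
    {Ω : Type*} [MeasureSpace Ω] (μ : Measure Ω) [IsProbabilityMeasure μ]
    (Q : Ω → ℝ) (hQint : Integrable Q μ) (hQpos : ∀ ω, 0 ≤ Q ω)
    (γ C : ℝ) (hγ0 : 0 < γ) (hγ1 : γ < 1) (hC : 0 < C)
    (hmean : ∫ ω, Q ω ∂μ = γ * C) :
    ∀ i : ℝ, 0 ≤ i →
      (C ≤ i → (∫ ω, (nextState C i (Q ω) - i) ∂μ) ≤ -((1 - γ) * C)) ∧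
      (i < C → (∫ ω, (nextState C i (Q ω) - i) ∂μ) ≤ (γ / 2) * C) :=
  dynamic_capacity_drift_general μ Q hQint γ C hmean
end

section
/- Let S = Σ_{l=1}^{θC} X_l where X_l are i.i.d. Bernoulli with parameter A = 1 - e^{-γ/θ}, with 0 < γ < 1 and θ > 1. Then lim_{C→∞} -(1/C) log P(S > C) = (θ-1)log(θ-1) - θ log θ + γ(θ-1)/θ - log(1 - e^{-γ/θ}). -/
/-!
Write `n = ⌊θC⌋` and `T = (n choose C+1) A^(C+1) (1-A)^(n-C-1)` for the first term of the
tail. From index `C + 1` on, consecutive binomial terms shrink by a factor of at most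
`ρ = (θ-1)A/(1-A)`, which is `e^{-r*}` for the Cramér optimizer `r*`; `ρ < 1` is `θA < 1`, and
this holds because `A = 1 - e^{-γ/θ} < γ/θ` and `γ < 1`. Hence `T ≤ P(S > C) ≤ T/(1-ρ)`, so both
have the same exponential rate, and Stirling's formula `log m! = m log m - m + o(m)` evaluates
`-(1/C) log T`.
-/

open Filter Real

/-- Tail probability `P(S > a)` for `S` binomial with `n` trials and success
probability `A`. -/
noncomputable def binomTail (n : ℕ) (A : ℝ) (a : ℝ) : ℝ :=
  ∑ k ∈ Finset.range (n + 1), if a < (k : ℝ) then (n.choose k : ℝ) * A ^ k * (1 - A) ^ (n - k) else 0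

noncomputable def binomTerm (n : ℕ) (A : ℝ) (k : ℕ) : ℝ :=
  n.choose k * A ^ k * (1 - A) ^ (n - k)

section BinomialTail

variable {n : ℕ} {A : ℝ}

lemma binomTerm_nonneg (hA0 : 0 ≤ A) (hA1 : A ≤ 1) (k : ℕ) : 0 ≤ binomTerm n A k := by
  unfold binomTerm
  have : 0 ≤ 1 - A := sub_nonneg.mpr hA1
  positivity

lemma binomTerm_pos (hA0 : 0 < A) (hA1 : A < 1) {k : ℕ} (hk : k ≤ n) : 0 < binomTerm n A k := by
  unfold binomTerm
  have : 0 < 1 - A := sub_pos.mpr hA1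
  have : 0 < (n.choose k : ℝ) := by exact_mod_cast Nat.choose_pos hk
  positivity

lemma binomTail_natCast_eq_sum_Ico (n : ℕ) (A : ℝ) (k : ℕ) :
    binomTail n A k = ∑ j ∈ Finset.Ico (k + 1) (n + 1), binomTerm n A j := by
  rw [binomTail, ← Finset.sum_filter]
  congr 1
  ext j
  simp only [Finset.mem_filter, Finset.mem_range, Finset.mem_Ico, Nat.cast_lt]
  omega

lemma binomTerm_succ_le_binomTail (hA0 : 0 ≤ A) (hA1 : A ≤ 1) (k : ℕ) :
    binomTerm n A (k + 1) ≤ binomTail n A k := by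
  rw [binomTail_natCast_eq_sum_Ico]
  rcases le_or_gt (k + 1) n with hk | hk
  · exact Finset.single_le_sum (fun j _ => binomTerm_nonneg hA0 hA1 j)
      (Finset.mem_Ico.mpr ⟨le_rfl, by omega⟩)
  · rw [show binomTerm n A (k + 1) = 0 by simp [binomTerm, Nat.choose_eq_zero_of_lt hk]]
    exact Finset.sum_nonneg fun j _ => binomTerm_nonneg hA0 hA1 j

lemma binomTerm_succ_mul (n : ℕ) (A : ℝ) (j : ℕ) :
    binomTerm n A (j + 1) * ((j + 1) * (1 - A)) = binomTerm n A j * ((n - j : ℕ) * A) := by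
  rcases lt_or_ge j n with hj | hj
  · have hchoose : (n.choose (j + 1) : ℝ) * (j + 1) = n.choose j * (n - j : ℕ) := by
      exact_mod_cast Nat.choose_succ_right_eq n j
    have hpow : (1 - A) ^ (n - j) = (1 - A) ^ (n - (j + 1)) * (1 - A) := by
      rw [← pow_succ]; congr 1; omega
    simp only [binomTerm, hpow, pow_succ]
    linear_combination A ^ j * A * (1 - A) ^ (n - (j + 1)) * (1 - A) * hchoose
  · simp [binomTerm, Nat.choose_eq_zero_of_lt (Nat.lt_succ_of_le hj), Nat.sub_eq_zero_of_le hj]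

lemma binomTerm_succ_le (hA0 : 0 ≤ A) (hA1 : A < 1) {q : ℝ} {j : ℕ}
    (hj : ((n - j : ℕ) : ℝ) ≤ q * (j + 1)) :
    binomTerm n A (j + 1) ≤ q * A / (1 - A) * binomTerm n A j := by
  have h1A : 0 < 1 - A := sub_pos.mpr hA1
  have hscale : 0 < (j + 1) * (1 - A) := by positivity
  refine le_of_mul_le_mul_right ?_ hscale
  calc binomTerm n A (j + 1) * ((j + 1) * (1 - A))
      = binomTerm n A j * ((n - j : ℕ) * A) := binomTerm_succ_mul n A j
    _ ≤ binomTerm n A j * (q * (j + 1) * A) := by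
        gcongr
        exact binomTerm_nonneg hA0 hA1.le j
    _ = q * A / (1 - A) * binomTerm n A j * ((j + 1) * (1 - A)) := by
        field_simp

end BinomialTail

lemma sum_Ico_le_div_one_sub_of_le_mul {t : ℕ → ℝ} {r : ℝ} (hr0 : 0 ≤ r) (hr1 : r < 1)
    {k : ℕ} (ht : ∀ j, k ≤ j → 0 ≤ t j ∧ t (j + 1) ≤ r * t j) (m : ℕ) :
    ∑ j ∈ Finset.Ico k m, t j ≤ t k / (1 - r) := by
  have hgeom : ∀ i, t (k + i) ≤ t k * r ^ i := by
    intro i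
    induction i with
    | zero => simp
    | succ i ih =>
      calc t (k + i + 1) ≤ r * t (k + i) := (ht (k + i) (Nat.le_add_right k i)).2
        _ ≤ r * (t k * r ^ i) := by gcongr
        _ = t k * r ^ (i + 1) := by ring
  calc ∑ j ∈ Finset.Ico k m, t j
      = ∑ i ∈ Finset.range (m - k), t (k + i) := Finset.sum_Ico_eq_sum_range t k m
    _ ≤ ∑ i ∈ Finset.range (m - k), t k * r ^ i := Finset.sum_le_sum fun i _ => hgeom i
    _ = t k * ∑ i ∈ Finset.Ico 0 (m - k), r ^ i := by rw [Finset.mul_sum, Finset.range_eq_Ico]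
    _ ≤ t k * (r ^ 0 / (1 - r)) := by
        gcongr
        · exact (ht k le_rfl).1
        · exact geom_sum_Ico_le_of_lt_one hr0 hr1
    _ = t k / (1 - r) := by ring

lemma binomTail_le {n k : ℕ} {A q : ℝ} (hA0 : 0 ≤ A) (hA1 : A < 1) (hq : 0 ≤ q)
    (hρ : q * A / (1 - A) < 1) (hn : (n : ℝ) ≤ (q + 1) * k) :
    binomTail n A k ≤ binomTerm n A (k + 1) / (1 - q * A / (1 - A)) := by
  rw [binomTail_natCast_eq_sum_Ico]
  refine sum_Ico_le_div_one_sub_of_le_mul (by have := sub_pos.mpr hA1; positivity) hρ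
    (fun j hj => ⟨binomTerm_nonneg hA0 hA1.le j, binomTerm_succ_le hA0 hA1 ?_⟩) _
  have hjk : (k : ℝ) + 1 ≤ j := by exact_mod_cast hj
  rcases le_or_gt j n with hjn | hjn
  · rw [Nat.cast_sub hjn]
    nlinarith
  · rw [Nat.sub_eq_zero_of_le hjn.le, Nat.cast_zero]
    positivity

open scoped Nat in
lemma tendsto_log_factorial_sub_div_self :
    Tendsto (fun n : ℕ => (log n ! - (n * log n - n)) / n) atTop (nhds 0) := by
  have hstirling : Tendsto (fun n : ℕ => log (Stirling.stirlingSeq n) / n) atTop (nhds 0) :=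
    ((continuousAt_log (by positivity)).tendsto.comp
      Stirling.tendsto_stirlingSeq_sqrt_pi).div_atTop tendsto_natCast_atTop_atTop
  have hlog : Tendsto (fun n : ℕ => log (2 * n) / n) atTop (nhds 0) := by
    have h := (isLittleO_log_id_atTop.tendsto_div_nhds_zero.comp
      (tendsto_natCast_atTop_atTop.const_mul_atTop (two_pos (α := ℝ)))).const_mul 2
    rw [mul_zero] at h
    refine h.congr' ?_
    filter_upwards [eventually_gt_atTop 0] with n hn
    simp only [Function.comp, id]
    field_simp
  have h := hstirling.add (hlog.const_mul (1 / 2))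
  rw [mul_zero, add_zero] at h
  refine h.congr' ?_
  filter_upwards [eventually_gt_atTop 0] with n hn
  have hn' : (n : ℝ) ≠ 0 := by positivity
  rw [Stirling.log_stirlingSeq_formula, log_div hn' (exp_ne_zero 1), log_exp]
  field_simp
  ring

open scoped Nat in
lemma tendsto_log_factorial_sub_div {m : ℕ → ℕ} {a : ℝ} (ha : 0 < a)
    (hm : Tendsto (fun C => (m C : ℝ) / C) atTop (nhds a)) :
    Tendsto (fun C => (log (m C)! - (m C * log (m C) - m C)) / C) atTop (nhds 0) := by
  have hm_top : Tendsto m atTop atTop :=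
    tendsto_natCast_atTop_iff.mp (tendsto_natCast_atTop_atTop.num ha hm)
  have h := (tendsto_log_factorial_sub_div_self.comp hm_top).mul hm
  rw [zero_mul] at h
  refine h.congr' ?_
  filter_upwards [hm_top.eventually_gt_atTop 0] with C hC
  simp only [Function.comp]
  rw [div_mul_div_cancel₀ (by positivity)]

section RateFunction

variable {k n : ℕ → ℕ} {a c : ℝ}

lemma eventually_lt_of_tendsto_div (hk : Tendsto (fun C => (k C : ℝ) / C) atTop (nhds a))
    (hn : Tendsto (fun C => (n C : ℝ) / C) atTop (nhds c)) (hac : a < c) :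
    ∀ᶠ C in atTop, k C < n C := by
  filter_upwards [(hn.sub hk).eventually_const_lt (sub_pos.mpr hac), eventually_gt_atTop 0]
    with C hC hC0
  have hC0' : (0 : ℝ) < C := by exact_mod_cast hC0
  exact_mod_cast (div_lt_div_iff_of_pos_right hC0').mp (sub_pos.mp hC)

lemma tendsto_natCast_sub_div (hk : Tendsto (fun C => (k C : ℝ) / C) atTop (nhds a))
    (hn : Tendsto (fun C => (n C : ℝ) / C) atTop (nhds c)) (hac : a < c) :
    Tendsto (fun C => ((n C - k C : ℕ) : ℝ) / C) atTop (nhds (c - a)) := by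
  refine (hn.sub hk).congr' ?_
  filter_upwards [eventually_lt_of_tendsto_div hk hn hac] with C hC
  rw [Nat.cast_sub hC.le, sub_div]

open scoped Nat in
lemma tendsto_log_choose_div (ha : 0 < a) (hac : a < c)
    (hk : Tendsto (fun C => (k C : ℝ) / C) atTop (nhds a))
    (hn : Tendsto (fun C => (n C : ℝ) / C) atTop (nhds c)) :
    Tendsto (fun C => log ((n C).choose (k C)) / C) atTop
      (nhds (c * log c - a * log a - (c - a) * log (c - a))) := by
  have hm := tendsto_natCast_sub_div hk hn hac
  have hstirling := ((tendsto_log_factorial_sub_div (ha.trans hac) hn).sub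
    (tendsto_log_factorial_sub_div ha hk)).sub (tendsto_log_factorial_sub_div (sub_pos.mpr hac) hm)
  have hentropy := ((continuous_mul_log.tendsto c).comp hn).sub
    ((continuous_mul_log.tendsto a).comp hk) |>.sub ((continuous_mul_log.tendsto (c - a)).comp hm)
  have h := hstirling.add hentropy
  rw [sub_zero, sub_zero, zero_add] at h
  refine h.congr' ?_
  filter_upwards [eventually_lt_of_tendsto_div hk hn hac, hk.eventually_const_lt ha,
    eventually_gt_atTop 0] with C hkn hk0 hC0
  have hk0 : 0 < k C := Nat.pos_of_ne_zero fun h => by simp [h] at hk0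
  obtain ⟨m, hm_eq⟩ : ∃ m, n C = k C + m := ⟨n C - k C, by omega⟩
  have hm0 : 0 < m := by omega
  have hfact : (n C).choose (k C) * (k C)! * m ! = (n C)! := by
    rw [← Nat.choose_mul_factorial_mul_factorial hkn.le, hm_eq, Nat.add_sub_cancel_left]
  have hchoose : ((n C).choose (k C) : ℝ) ≠ 0 := by exact_mod_cast (Nat.choose_pos hkn.le).ne'
  have hlog_choose : log ((n C).choose (k C)) = log (n C)! - log (k C)! - log m ! := by
    rw [← hfact, Nat.cast_mul, Nat.cast_mul, log_mul (by positivity) (by positivity),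
      log_mul hchoose (by positivity)]
    ring
  simp only [Function.comp, hm_eq, Nat.add_sub_cancel_left] at hlog_choose ⊢
  rw [hlog_choose, log_div (by positivity) (by positivity), log_div (by positivity) (by positivity),
    log_div (by positivity) (by positivity)]
  push_cast
  field_simp
  ring

lemma tendsto_log_binomTerm_div {A : ℝ} (hA0 : 0 < A) (hA1 : A < 1) (ha : 0 < a) (hac : a < c)
    (hk : Tendsto (fun C => (k C : ℝ) / C) atTop (nhds a))
    (hn : Tendsto (fun C => (n C : ℝ) / C) atTop (nhds c)) :
    Tendsto (fun C => log (binomTerm (n C) A (k C)) / C) atTop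
      (nhds (c * log c - a * log a - (c - a) * log (c - a) +
        a * log A + (c - a) * log (1 - A))) := by
  refine ((tendsto_log_choose_div ha hac hk hn).add (hk.mul_const (log A)) |>.add
    ((tendsto_natCast_sub_div hk hn hac).mul_const (log (1 - A)))).congr' ?_
  filter_upwards [eventually_lt_of_tendsto_div hk hn hac] with C hkn
  have hchoose : (0 : ℝ) < (n C).choose (k C) := by exact_mod_cast Nat.choose_pos hkn.le
  have h1A : 0 < 1 - A := sub_pos.mpr hA1
  rw [binomTerm, log_mul (by positivity) (by positivity), log_mul (by positivity) (by positivity),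
    log_pow, log_pow]
  ring

end RateFunction

lemma tendsto_log_div_of_le_of_le_mul {T P : ℕ → ℝ} {K L : ℝ} (hK : 0 < K)
    (hTP : ∀ᶠ C in atTop, 0 < T C ∧ T C ≤ P C ∧ P C ≤ K * T C)
    (hT : Tendsto (fun C => log (T C) / C) atTop (nhds L)) :
    Tendsto (fun C => log (P C) / C) atTop (nhds L) := by
  have hupper := hT.add ((tendsto_const_nhds (x := log K)).div_atTop tendsto_natCast_atTop_atTop)
  rw [add_zero] at hupper
  refine tendsto_of_tendsto_of_tendsto_of_le_of_le' hT hupper ?_ ?_ <;>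
    filter_upwards [hTP] with C ⟨hT0, hlow, hup⟩
  · gcongr
  · rw [← add_div, add_comm, ← log_mul hK.ne' hT0.ne']
    gcongr
    exact hT0.trans_le hlow

lemma mul_one_sub_exp_neg_div_lt {γ θ : ℝ} (hγ : γ ≠ 0) (hθ : 0 < θ) :
    θ * (1 - exp (-(γ / θ))) < γ := by
  have := add_one_lt_exp (x := -(γ / θ)) (by simpa using div_ne_zero hγ hθ.ne')
  calc θ * (1 - exp (-(γ / θ))) < θ * (γ / θ) := by gcongr; linarith
    _ = γ := by field_simp

lemma tendsto_natCast_succ_div_self :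
    Tendsto (fun C : ℕ => ((C + 1 : ℕ) : ℝ) / C) atTop (nhds 1) := by
  have h := (tendsto_one_div_atTop_nhds_zero_nat (𝕜 := ℝ)).const_add 1
  rw [add_zero] at h
  refine h.congr' ?_
  filter_upwards [eventually_gt_atTop 0] with C hC
  push_cast
  field_simp

/-- Diversity gain of the non-predictive symmetric multicast network: with
`S = Σ_{l=1}^{θC} X_l`, `X_l` i.i.d. Bernoulli with parameter `A = 1 - e^{-γ/θ}`
(`0 < γ < 1`, `θ > 1`),
`lim -(1/C) log P(S > C) = (θ-1)log(θ-1) - θ log θ + γ(θ-1)/θ - log(1-e^{-γ/θ})`. -/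
theorem multicast_nonpredictive_diversity (γ θ : ℝ) (hγ0 : 0 < γ) (hγ1 : γ < 1) (hθ : 1 < θ) :
    Tendsto (fun C : ℕ =>
        -(1 / (C : ℝ)) * Real.log (binomTail ⌊θ * (C : ℝ)⌋₊ (1 - Real.exp (-(γ / θ))) C))
      atTop
      (nhds ((θ - 1) * Real.log (θ - 1) - θ * Real.log θ + γ * ((θ - 1) / θ) -
        Real.log (1 - Real.exp (-(γ / θ))))) := by
  have hθ0 : 0 < θ := by linarith
  set A := 1 - exp (-(γ / θ)) with hA
  have hA0 : 0 < A := by linarith [exp_lt_one_iff.mpr (neg_lt_zero.mpr (div_pos hγ0 hθ0))]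
  have hA1 : A < 1 := by simpa [hA] using exp_pos (-(γ / θ))
  set ρ := (θ - 1) * A / (1 - A)
  have hρ : ρ < 1 := by
    rw [div_lt_one (by linarith)]
    linarith [mul_one_sub_exp_neg_div_lt hγ0.ne' hθ0]
  have hn : Tendsto (fun C : ℕ => (⌊θ * (C : ℝ)⌋₊ : ℝ) / C) atTop (nhds θ) :=
    (tendsto_nat_floor_mul_div_atTop hθ0.le).comp tendsto_natCast_atTop_atTop
  have hk := tendsto_natCast_succ_div_self
  have hbounds : ∀ᶠ C : ℕ in atTop, 0 < binomTerm ⌊θ * (C : ℝ)⌋₊ A (C + 1) ∧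
      binomTerm ⌊θ * (C : ℝ)⌋₊ A (C + 1) ≤ binomTail ⌊θ * (C : ℝ)⌋₊ A C ∧
      binomTail ⌊θ * (C : ℝ)⌋₊ A C ≤ (1 - ρ)⁻¹ * binomTerm ⌊θ * (C : ℝ)⌋₊ A (C + 1) := by
    filter_upwards [eventually_lt_of_tendsto_div hk hn hθ] with C hC
    refine ⟨binomTerm_pos hA0 hA1 hC.le, binomTerm_succ_le_binomTail hA0.le hA1.le C, ?_⟩
    rw [← div_eq_inv_mul]
    exact binomTail_le hA0.le hA1 (by linarith) hρ (by simpa using Nat.floor_le (by positivity))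
  have htail := tendsto_log_div_of_le_of_le_mul (inv_pos.mpr (sub_pos.mpr hρ)) hbounds
    (tendsto_log_binomTerm_div hA0 hA1 one_pos hθ hk hn)
  have hlog1A : log (1 - A) = -(γ / θ) := by rw [hA, sub_sub_cancel, log_exp]
  convert htail.neg using 2 with C
  · ring
  · rw [hlog1A, log_one]; field_simp; ring
end

section
/- With d_N(γ,θ) = (θ-1)log(θ-1) - θ log θ + γ(θ-1)/θ - log(1-e^{-γ/θ}) for θ > 1 and γ ∈ (0,1): lim_{θ→∞} d_N(γ,θ) = γ - 1 - log γ, and d_N(γ,θ) > γ - 1 - log γ for all θ > 1. -/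
/-!
With `s = 1/θ` and `x = γ/θ`, the excess of `d_N(γ,θ)` over the unicast gain
`γ - 1 - log γ` is `G(s) - L(x)`, where `G(s) = 1 + ((1-s)/s) log(1-s)` and
`L(x) = log((eˣ-1)/x)`. Both are `s/2` resp. `x/2` to first order, but `G` has the larger
quadratic term: `G(s) ≥ s/2 + s²/6` while `L(x) ≤ x/2 + x²/8`, and `x = γs < s`; this gives
the strict inequality. Since also `0 ≤ L(x)` and `G(s) ≤ s`, the excess lies in `(0, 1/θ]`,
which gives the limit.
-/

open Filter Real

/-- Multicast non-predictive diversity gain with `θC` symmetric sources. -/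
noncomputable def dN (γ θ : ℝ) : ℝ :=
  (θ - 1) * Real.log (θ - 1) - θ * Real.log θ + γ * ((θ - 1) / θ) -
    Real.log (1 - Real.exp (-(γ / θ)))

open Nat in
lemma Real.sinh_le_mul_exp_half_sq {x : ℝ} (hx : 0 ≤ x) : sinh x ≤ x * exp (x ^ 2 / 2) := by
  have hexp : HasSum (fun n : ℕ => x * ((x ^ 2 / 2) ^ n / n !)) (x * exp (x ^ 2 / 2)) := by
    rw [exp_eq_exp_ℝ]
    exact (NormedSpace.expSeries_div_hasSum_exp (x ^ 2 / 2)).mul_left x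
  refine hasSum_le (fun n => ?_) (hasSum_sinh x) hexp
  have hfact : (2 ^ n * n ! : ℝ) ≤ (2 * n + 1)! := by
    exact_mod_cast (two_pow_mul_factorial_le_factorial_two_mul n).trans
      (factorial_le (by omega))
  calc x ^ (2 * n + 1) / (2 * n + 1)! ≤ x ^ (2 * n + 1) / (2 ^ n * n !) := by gcongr
    _ = x * ((x ^ 2 / 2) ^ n / n !) := by rw [div_pow, ← pow_mul]; field_simp; ring

lemma exp_sub_one_le_mul_exp {x : ℝ} (hx : 0 ≤ x) :
    exp x - 1 ≤ x * exp (x / 2 + x ^ 2 / 8) := by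
  have hsplit : exp x - 1 = 2 * exp (x / 2) * sinh (x / 2) := by
    have hsq : exp x = exp (x / 2) * exp (x / 2) := by rw [← exp_add]; ring_nf
    have hinv : exp (x / 2) * exp (-(x / 2)) = 1 := by rw [← exp_add]; simp
    rw [sinh_eq]; linear_combination hsq + hinv
  calc exp x - 1 = 2 * exp (x / 2) * sinh (x / 2) := hsplit
    _ ≤ 2 * exp (x / 2) * (x / 2 * exp ((x / 2) ^ 2 / 2)) := by
      gcongr; exact sinh_le_mul_exp_half_sq (by positivity)
    _ = x * exp (x / 2 + x ^ 2 / 8) := by rw [exp_add]; ring_nf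

lemma log_one_sub_le {s : ℝ} (h0 : 0 ≤ s) (h1 : s < 1) : log (1 - s) ≤ -s - s ^ 2 / 2 := by
  have := sum_le_hasSum (Finset.range 2) (fun n _ => by positivity)
    (hasSum_pow_div_log_of_abs_lt_one (by rwa [abs_of_nonneg h0]))
  norm_num [Finset.sum_range_succ] at this
  linarith

lemma hasDerivAt_one_sub_mul_log_one_sub {t : ℝ} (ht : t ≠ 1) :
    HasDerivAt (fun s => (1 - s) * log (1 - s)) (-log (1 - t) - 1) t := by
  refine ((hasDerivAt_mul_log (sub_ne_zero.2 ht.symm)).comp t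
    ((hasDerivAt_id t).const_sub 1)).congr_deriv ?_
  ring

lemma neg_add_le_one_sub_mul_log_one_sub {s : ℝ} (h0 : 0 ≤ s) (h1 : s < 1) :
    -s + s ^ 2 / 2 + s ^ 3 / 6 ≤ (1 - s) * log (1 - s) := by
  let f : ℝ → ℝ := fun t => (1 - t) * log (1 - t) + t - t ^ 2 / 2 - t ^ 3 / 6
  have hf : ∀ t < 1, HasDerivAt f (-log (1 - t) - t - t ^ 2 / 2) t := fun t ht => by
    refine ((((hasDerivAt_one_sub_mul_log_one_sub ht.ne).add (hasDerivAt_id t)).sub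
      ((hasDerivAt_pow 2 t).div_const 2)).sub ((hasDerivAt_pow 3 t).div_const 6)).congr_deriv ?_
    push_cast; ring
  have hmono : MonotoneOn f (Set.Ico 0 1) := by
    refine monotoneOn_of_hasDerivWithinAt_nonneg (convex_Ico 0 1)
      (fun t ht => (hf t ht.2).continuousAt.continuousWithinAt)
      (fun t ht => (hf t (interior_subset ht).2).hasDerivWithinAt) fun t ht => ?_
    rw [interior_Ico] at ht
    linarith [log_one_sub_le ht.1.le ht.2]
  have := hmono ⟨le_rfl, zero_lt_one⟩ ⟨h0, h1⟩ h0
  simp only [f] at this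
  norm_num at this
  linarith

noncomputable def logExprel (x : ℝ) : ℝ := log ((exp x - 1) / x)

noncomputable def logOneSubTerm (s : ℝ) : ℝ := 1 + (1 - s) / s * log (1 - s)

lemma logExprel_nonneg {x : ℝ} (hx : 0 < x) : 0 ≤ logExprel x :=
  log_nonneg <| (one_le_div hx).2 <| by linarith [add_one_le_exp x]

lemma logExprel_le {x : ℝ} (hx : 0 < x) : logExprel x ≤ x / 2 + x ^ 2 / 8 := by
  have hpos : 0 < (exp x - 1) / x := div_pos (by linarith [add_one_lt_exp hx.ne']) hx
  rw [logExprel, log_le_iff_le_exp hpos, div_le_iff₀ hx, mul_comm]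
  exact exp_sub_one_le_mul_exp hx.le

lemma logOneSubTerm_le {s : ℝ} (h0 : 0 < s) (h1 : s < 1) : logOneSubTerm s ≤ s := by
  have hlog : log (1 - s) ≤ -s := by linarith [log_le_sub_one_of_pos (sub_pos.2 h1)]
  have : (1 - s) / s * log (1 - s) ≤ (1 - s) / s * -s :=
    mul_le_mul_of_nonneg_left hlog (div_nonneg (sub_pos.2 h1).le h0.le)
  rw [logOneSubTerm]
  field_simp at this ⊢
  linarith

lemma le_logOneSubTerm {s : ℝ} (h0 : 0 < s) (h1 : s < 1) :
    s / 2 + s ^ 2 / 6 ≤ logOneSubTerm s := by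
  have := neg_add_le_one_sub_mul_log_one_sub h0.le h1
  rw [logOneSubTerm, div_mul_eq_mul_div, ← sub_le_iff_le_add', le_div_iff₀ h0]
  linarith

lemma logExprel_mul_lt_logOneSubTerm {γ s : ℝ} (hγ0 : 0 < γ) (hγ1 : γ < 1) (hs0 : 0 < s)
    (hs1 : s < 1) : logExprel (γ * s) < logOneSubTerm s := by
  have hγs : γ * s < s := mul_lt_of_lt_one_left hs0 hγ1
  calc logExprel (γ * s) ≤ γ * s / 2 + (γ * s) ^ 2 / 8 := logExprel_le (by positivity)
    _ < s / 2 + s ^ 2 / 6 := by gcongr; nlinarith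
    _ ≤ logOneSubTerm s := le_logOneSubTerm hs0 hs1

lemma dN_eq_add_logOneSubTerm_sub_logExprel {γ θ : ℝ} (hγ : 0 < γ) (hθ : 1 < θ) :
    dN γ θ = γ - 1 - log γ + logOneSubTerm θ⁻¹ - logExprel (γ * θ⁻¹) := by
  have hθ0 : 0 < θ := by linarith
  have hx : 0 < γ * θ⁻¹ := by positivity
  have hexp : 0 < exp (γ * θ⁻¹) - 1 := by linarith [add_one_lt_exp hx.ne']
  have hlogθ : log (1 - θ⁻¹) = log (θ - 1) - log θ := by
    rw [← log_div (by linarith) hθ0.ne']; congr 1; field_simp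
  have hlog1 : log (1 - exp (-(γ / θ))) = -(γ / θ) + log (exp (γ * θ⁻¹) - 1) := by
    rw [← log_exp (-(γ / θ)), ← log_mul (exp_ne_zero _) hexp.ne', log_exp, mul_sub,
      ← exp_add]
    simp [div_eq_mul_inv]
  rw [dN, logOneSubTerm, logExprel, log_div hexp.ne' hx.ne', log_mul hγ.ne' (inv_ne_zero hθ0.ne'),
    log_inv, hlogθ, hlog1]
  field_simp
  ring

/-- `d_N(γ,θ) → γ - 1 - log γ` as `θ → ∞`, and `d_N(γ,θ) > γ - 1 - log γ` for all
`θ > 1` (multicast beats unicast). -/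
theorem multicast_vs_unicast_diversity (γ : ℝ) (hγ0 : 0 < γ) (hγ1 : γ < 1) :
    Tendsto (fun θ : ℝ => dN γ θ) atTop (nhds (γ - 1 - Real.log γ)) ∧
    ∀ θ : ℝ, 1 < θ → dN γ θ > γ - 1 - Real.log γ := by
  have hbounds : ∀ θ : ℝ, 1 < θ →
      γ - 1 - log γ < dN γ θ ∧ dN γ θ ≤ γ - 1 - log γ + θ⁻¹ := fun θ hθ => by
    have hs0 : 0 < θ⁻¹ := by positivity
    have hs1 : θ⁻¹ < 1 := inv_lt_one_of_one_lt₀ hθ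
    rw [dN_eq_add_logOneSubTerm_sub_logExprel hγ0 hθ]
    constructor
    · linarith [logExprel_mul_lt_logOneSubTerm hγ0 hγ1 hs0 hs1]
    · linarith [logOneSubTerm_le hs0 hs1, logExprel_nonneg (mul_pos hγ0 hs0)]
  refine ⟨?_, fun θ hθ => (hbounds θ hθ).1⟩
  have hupper :
      Tendsto (fun θ : ℝ => γ - 1 - log γ + θ⁻¹) atTop (nhds (γ - 1 - log γ)) := by
    simpa using (tendsto_const_nhds (x := γ - 1 - log γ)).add tendsto_inv_atTop_zero
  exact tendsto_of_tendsto_of_tendsto_of_le_of_le' tendsto_const_nhds hupper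
    ((eventually_gt_atTop (1 : ℝ)).mono fun θ hθ => (hbounds θ hθ).1.le)
    ((eventually_gt_atTop (1 : ℝ)).mono fun θ hθ => (hbounds θ hθ).2)
end
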